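/- The partial derivative of the call price C with respect to the strike K (the strike delta) equals -e^{-rτ}·Φ(d_{t,2}^α), where τ = T - t. -/

import Mathlib

open Real

/-- Standard normal CDF. -/
noncomputable def Phi (d : ℝ) : ℝ :=
  ∫ u in Set.Iic d, Real.exp (-u ^ 2 / 2) / Real.sqrt (2 * Real.pi)

/-- d_{t,1}^α of the crisis model. -/
noncomputable def d1 (s K σ α r t T : ℝ) : ℝ :=
  (Real.log ((s + α / σ * Real.exp (r * t)) / (K + α / σ * Real.exp (r * T)))
    + (r + σ ^ 2 / 2) * (T - t)) / (σ * Real.sqrt (T - t))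

/-- d_{t,2}^α of the crisis model. -/
noncomputable def d2 (s K σ α r t T : ℝ) : ℝ :=
  d1 s K σ α r t T - σ * Real.sqrt (T - t)

/-- Crisis-model European call price. -/
noncomputable def C (s K σ α r t T : ℝ) : ℝ :=
  (s + α / σ * Real.exp (r * t)) * Phi (d1 s K σ α r t T)
    - (K * Real.exp (-r * (T - t)) + α / σ * Real.exp (r * t)) * Phi (d2 s K σ α r t T)
/-!
Differentiating `C` in `K` gives `-e^{-rτ} Φ(d₂)` plus the terms coming from `∂d₁/∂K = ∂d₂/∂K`,
weighted by `S φ(d₁)` and `(K + B) e^{-rτ} φ(d₂)`, where `S = s + (α/σ)e^{rt}` and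
`B = (α/σ)e^{rT}`. These weights coincide: `φ(d₁ - σ√τ) = φ(d₁) e^{d₁σ√τ - σ²τ/2}` and
`d₁σ√τ - σ²τ/2 = log (S / (K + B)) + rτ`, so the extra terms cancel.
-/

open MeasureTheory ProbabilityTheory Set

theorem hasDerivAt_integral_Iic {E : Type*} [NormedAddCommGroup E] [NormedSpace ℝ E]
    [CompleteSpace E] {f : ℝ → E} (hf : Integrable f) (hc : Continuous f) (x : ℝ) :
    HasDerivAt (fun y => ∫ u in Iic y, f u) (f x) x := by
  have h : (fun y => ∫ u in Iic y, f u) =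
      fun y => (∫ u in Iic 0, f u) + ∫ u in (0 : ℝ)..y, f u := by
    funext y
    rw [← intervalIntegral.integral_Iic_sub_Iic hf.integrableOn hf.integrableOn]
    abel
  rw [h]
  exact (intervalIntegral.integral_hasDerivAt_right hf.intervalIntegrable
    (hc.stronglyMeasurableAtFilter _ _) hc.continuousAt).const_add _

theorem continuous_gaussianPDFReal (μ : ℝ) (v : NNReal) : Continuous (gaussianPDFReal μ v) := by
  unfold gaussianPDFReal
  fun_prop

theorem Phi_eq_integral_gaussianPDFReal :
    Phi = fun d => ∫ u in Iic d, gaussianPDFReal 0 1 u := by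
  funext d
  simp [Phi, gaussianPDFReal, div_eq_inv_mul]

theorem hasDerivAt_Phi (d : ℝ) : HasDerivAt Phi (gaussianPDFReal 0 1 d) d := by
  rw [Phi_eq_integral_gaussianPDFReal]
  exact hasDerivAt_integral_Iic (integrable_gaussianPDFReal 0 1) (continuous_gaussianPDFReal 0 1) d

theorem gaussianPDFReal_zero_one_sub (d q : ℝ) :
    gaussianPDFReal 0 1 (d - q) = gaussianPDFReal 0 1 d * exp (d * q - q ^ 2 / 2) := by
  simp only [gaussianPDFReal, NNReal.coe_one, mul_assoc, ← exp_add]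
  ring_nf

theorem mul_gaussianPDFReal_d1_eq_mul_gaussianPDFReal_d2 {S K σ r τ : ℝ} (hS : 0 < S)
    (hK : 0 < K) (hσ : σ ≠ 0) (hτ : 0 < τ) :
    S * gaussianPDFReal 0 1 ((log (S / K) + (r + σ ^ 2 / 2) * τ) / (σ * √τ)) =
      K * exp (-r * τ) *
        gaussianPDFReal 0 1 ((log (S / K) + (r + σ ^ 2 / 2) * τ) / (σ * √τ) - σ * √τ) := by
  have hq : σ * √τ ≠ 0 := mul_ne_zero hσ (sqrt_pos.2 hτ).ne'
  have hexponent : (log (S / K) + (r + σ ^ 2 / 2) * τ) / (σ * √τ) * (σ * √τ) - (σ * √τ) ^ 2 / 2 =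
      log (S / K) + r * τ := by
    rw [div_mul_cancel₀ _ hq, mul_pow, sq_sqrt hτ.le]
    ring
  rw [gaussianPDFReal_zero_one_sub, hexponent, exp_add, exp_log (div_pos hS hK), neg_mul, exp_neg]
  field_simp

theorem hasDerivAt_d1_strike {s K σ α r t T : ℝ}
    (h1 : s + α / σ * exp (r * t) ≠ 0) (h2 : K + α / σ * exp (r * T) ≠ 0) :
    HasDerivAt (fun k => d1 s k σ α r t T)
      (-1 / ((K + α / σ * exp (r * T)) * (σ * √(T - t)))) K := by
  have hlog := ((hasDerivAt_const K (s + α / σ * exp (r * t))).div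
    ((hasDerivAt_id K).add_const (α / σ * exp (r * T))) h2).log (div_ne_zero h1 h2)
  refine ((hlog.add_const ((r + σ ^ 2 / 2) * (T - t))).div_const (σ * √(T - t))).congr_deriv ?_
  simp only [Pi.div_apply, id]
  generalize s + α / σ * exp (r * t) = S at h1 ⊢
  generalize α / σ * exp (r * T) = B at h2 ⊢
  field_simp
  ring

theorem hasDerivAt_d2_strike {s K σ α r t T : ℝ}
    (h1 : s + α / σ * exp (r * t) ≠ 0) (h2 : K + α / σ * exp (r * T) ≠ 0) :
    HasDerivAt (fun k => d2 s k σ α r t T)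
      (-1 / ((K + α / σ * exp (r * T)) * (σ * √(T - t)))) K :=
  (hasDerivAt_d1_strike h1 h2).sub_const _

theorem crisis_strike_delta_general (s K σ α r t T : ℝ)
    (hσ : 0 < σ) (htT : t < T)
    (h1 : 0 < s + α / σ * Real.exp (r * t))
    (h2 : 0 < K + α / σ * Real.exp (r * T)) :
    HasDerivAt (fun k => C s k σ α r t T)
      (-(Real.exp (-r * (T - t)) * Phi (d2 s K σ α r t T))) K := by
  set S := s + α / σ * exp (r * t)
  set B := α / σ * exp (r * T)
  have hdiscount :
      K * exp (-r * (T - t)) + α / σ * exp (r * t) = (K + B) * exp (-r * (T - t)) := by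
    rw [add_mul, mul_assoc (α / σ), ← exp_add]
    ring_nf
  have hdensity : S * gaussianPDFReal 0 1 (d1 s K σ α r t T) =
      (K + B) * exp (-r * (T - t)) * gaussianPDFReal 0 1 (d2 s K σ α r t T) :=
    mul_gaussianPDFReal_d1_eq_mul_gaussianPDFReal_d2 h1 h2 hσ.ne' (sub_pos.2 htT)
  have hC := (((hasDerivAt_Phi _).comp K (hasDerivAt_d1_strike h1.ne' h2.ne')).const_mul S).sub
    ((((hasDerivAt_id K).mul_const (exp (-r * (T - t)))).add_const (α / σ * exp (r * t))).mul
      ((hasDerivAt_Phi _).comp K (hasDerivAt_d2_strike h1.ne' h2.ne')))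
  refine hC.congr_deriv ?_
  simp only [Function.comp_apply, id, one_mul, hdiscount]
  linear_combination (-1 / ((K + B) * (σ * √(T - t)))) * hdensity

/-- Strike delta of the crisis-model call: ∂C/∂K = -e^{-rτ}Φ(d₂). -/
theorem crisis_strike_delta (s K σ α r t T : ℝ)
    (hs : 0 < s) (hK : 0 < K) (hσ : 0 < σ) (hα : 0 ≤ α)
    (ht : 0 ≤ t) (htT : t < T)
    (h1 : 0 < s + α / σ * Real.exp (r * t))
    (h2 : 0 < K + α / σ * Real.exp (r * T)) :
    HasDerivAt (fun k => C s k σ α r t T)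
      (-(Real.exp (-r * (T - t)) * Phi (d2 s K σ α r t T))) K :=
  crisis_strike_delta_general s K σ α r t T hσ htT h1 h2
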